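/- arXiv:2006.10586 — 4 statements merged into one kernel-verified Lean document; each statement's English description precedes it below -/
import Mathlib

section
/- Let n ≥ 2, τ > 0, K > 0, let v̂' ∈ ℝ^{n−1} be a unit vector, and set ξ = iτ(v̂', 0) − τe_n ∈ ℂⁿ. Then the function E_ξ(x) = exp(iτ v̂'·x' − τx_n) is Lebesgue integrable on the paraboloid region P = { x = (x', x_n) ∈ ℝⁿ : x_n > K|x'|² }, and ∫_P E_ξ(x) dx = τ^{−1} (π/(τK))^{(n−1)/2} exp(−τ/(4K)). -/
/-!
The shear `(x', t) ↦ (x', t - K‖x'‖²)` preserves Lebesgue measure and maps the paraboloid onto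
`ℝⁿ⁻¹ × (0, ∞)`, on which the integrand factorises as
`exp (iτ v̂'·x' - τK‖x'‖²) · exp (-τ s)`. Integrating out `s` gives `τ⁻¹`, and what is left is the
Fourier transform of a Gaussian, `(π / (τK))^((n-1)/2) exp (-τ / (4K))`.
-/

open MeasureTheory Set

section Epigraph

variable {X : Type*} [MeasurableSpace X] {μ : Measure X} [SFinite μ] {h : X → ℝ}

theorem measurePreserving_shear_sub (hh : Measurable h) :
    MeasurePreserving (fun p : X × ℝ => (p.1, p.2 - h p.1)) (μ.prod volume) (μ.prod volume) :=
  (MeasurePreserving.id μ).skew_product (g := fun x t => t - h x)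
    (measurable_snd.sub (hh.comp measurable_fst))
    (Filter.Eventually.of_forall fun x => map_sub_right_eq_self volume (h x))

theorem measurableEmbedding_shear_sub (hh : Measurable h) :
    MeasurableEmbedding (fun p : X × ℝ => (p.1, p.2 - h p.1)) :=
  MeasurableEmbedding.of_measurable_inverse (g := fun p : X × ℝ => (p.1, p.2 + h p.1))
    (measurable_fst.prodMk (measurable_snd.sub (hh.comp measurable_fst)))
    (by
      rw [range_eq_univ.mpr fun q => ⟨(q.1, q.2 + h q.1), by simp⟩]
      exact .univ)
    (measurable_fst.prodMk (measurable_snd.add (hh.comp measurable_fst)))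
    (fun p => by simp)

omit [MeasurableSpace X] in
theorem preimage_shear_sub_univ_prod_Ioi :
    (fun p : X × ℝ => (p.1, p.2 - h p.1)) ⁻¹' (univ ×ˢ Ioi 0) = {p | h p.1 < p.2} := by
  ext p; simp [sub_pos]

theorem integrableOn_epigraph_mul_cexp_neg_mul (hh : Measurable h) {f : X → ℂ} {b : ℂ}
    (hb : 0 < b.re) (hf : Integrable (fun x => f x * Complex.exp (-b * h x)) μ) :
    IntegrableOn (fun p : X × ℝ => f p.1 * Complex.exp (-b * p.2)) {p | h p.1 < p.2}
      (μ.prod volume) := by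
  have hG : IntegrableOn
      (fun q : X × ℝ => f q.1 * Complex.exp (-b * h q.1) * Complex.exp (-b * q.2)) (univ ×ˢ Ioi 0)
      (μ.prod volume) := by
    rw [IntegrableOn, ← Measure.prod_restrict, Measure.restrict_univ]
    exact hf.mul_prod (integrableOn_exp_mul_complex_Ioi (by simpa using hb) 0)
  rw [← (measurePreserving_shear_sub hh).integrableOn_comp_preimage
    (measurableEmbedding_shear_sub hh), preimage_shear_sub_univ_prod_Ioi] at hG
  convert hG using 2 with p
  simp only [Function.comp, mul_assoc, ← Complex.exp_add]
  push_cast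
  ring_nf

theorem setIntegral_epigraph_mul_cexp_neg_mul (hh : Measurable h) (f : X → ℂ) {b : ℂ}
    (hb : 0 < b.re) :
    ∫ p in {p : X × ℝ | h p.1 < p.2}, f p.1 * Complex.exp (-b * p.2) ∂(μ.prod volume) =
      b⁻¹ * ∫ x, f x * Complex.exp (-b * h x) ∂μ := by
  have hG := (measurePreserving_shear_sub (μ := μ) hh).setIntegral_preimage_emb
    (measurableEmbedding_shear_sub hh)
    (fun q : X × ℝ => f q.1 * Complex.exp (-b * h q.1) * Complex.exp (-b * q.2)) (univ ×ˢ Ioi 0)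
  rw [preimage_shear_sub_univ_prod_Ioi, ← Measure.prod_restrict, Measure.restrict_univ,
    integral_prod_mul (fun x => f x * Complex.exp (-b * h x)) (fun t : ℝ => Complex.exp (-b * t)),
    integral_exp_mul_complex_Ioi (by simpa using hb)] at hG
  convert hG using 1
  · congr 1 with p
    simp only [mul_assoc, ← Complex.exp_add]
    push_cast
    ring_nf
  · simp [mul_comm]

end Epigraph

/-- For `n ≥ 2`, `τ > 0`, `K > 0` and a unit vector `v̂' ∈ ℝ^{n−1}`,
with `ξ = iτ(v̂',0) − τe_n`, the function `E_ξ(x) = exp(iτ v̂'·x' − τ x_n)` is Lebesgue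
integrable on the paraboloid region `P = {x : x_n > K|x'|²}` and
`∫_P E_ξ = τ⁻¹ (π/(τK))^{(n−1)/2} exp(−τ/(4K))`.  Here `ℝⁿ ∋ x = (x', x_n)` is modelled
as `EuclideanSpace ℝ (Fin (n-1)) × ℝ` with the (product) Lebesgue measure. -/
theorem cgo_paraboloid_integral (n : ℕ) (hn : 2 ≤ n) (τ K : ℝ) (hτ : 0 < τ) (hK : 0 < K)
    (v : EuclideanSpace ℝ (Fin (n - 1))) (hv : ‖v‖ = 1) :
    MeasureTheory.IntegrableOn
      (fun x : EuclideanSpace ℝ (Fin (n - 1)) × ℝ =>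
        Complex.exp (Complex.I * (τ : ℂ) * ((inner ℝ v x.1 : ℝ) : ℂ) - (τ : ℂ) * (x.2 : ℂ)))
      {x : EuclideanSpace ℝ (Fin (n - 1)) × ℝ | K * ‖x.1‖ ^ 2 < x.2} volume ∧
    ∫ x in {x : EuclideanSpace ℝ (Fin (n - 1)) × ℝ | K * ‖x.1‖ ^ 2 < x.2},
        Complex.exp (Complex.I * (τ : ℂ) * ((inner ℝ v x.1 : ℝ) : ℂ) - (τ : ℂ) * (x.2 : ℂ))
      = ((τ⁻¹ * (Real.pi / (τ * K)) ^ (((n : ℝ) - 1) / 2) * Real.exp (-τ / (4 * K)) : ℝ) : ℂ) := by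
  set f : EuclideanSpace ℝ (Fin (n - 1)) → ℂ := fun y =>
    Complex.exp (Complex.I * τ * (inner ℝ v y : ℝ))
  have hτ' : 0 < (τ : ℂ).re := by simpa using hτ
  have hτK : 0 < ((τ : ℂ) * K).re := by simpa using mul_pos hτ hK
  have hh : Measurable fun y : EuclideanSpace ℝ (Fin (n - 1)) => K * ‖y‖ ^ 2 := by fun_prop
  have hsplit : (fun x : EuclideanSpace ℝ (Fin (n - 1)) × ℝ =>
      Complex.exp (Complex.I * τ * (inner ℝ v x.1 : ℝ) - τ * x.2)) =
      fun x => f x.1 * Complex.exp (-τ * x.2) := by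
    funext x
    rw [← Complex.exp_add]
    ring_nf
  have hgauss : (fun y => f y * Complex.exp (-τ * ((K * ‖y‖ ^ 2 : ℝ) : ℂ))) =
      fun y => Complex.exp (-(τ * K) * ‖y‖ ^ 2 + Complex.I * τ * (inner ℝ v y : ℝ)) := by
    funext y
    rw [← Complex.exp_add]
    push_cast
    ring_nf
  have hdim : (((n - 1 : ℕ) : ℂ) / 2) = ((((n : ℝ) - 1) / 2 : ℝ) : ℂ) := by
    push_cast [Nat.cast_sub (by omega : 1 ≤ n)]
    ring
  have hexp :
      (Complex.I * τ) ^ 2 * ((1 : ℝ) : ℂ) ^ 2 / (4 * (τ * K)) = ((-τ / (4 * K) : ℝ) : ℂ) := by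
    rw [mul_pow, Complex.I_sq]
    push_cast
    field_simp
  rw [Measure.volume_eq_prod, hsplit]
  refine ⟨integrableOn_epigraph_mul_cexp_neg_mul hh hτ' ?_, ?_⟩
  · rw [hgauss]
    exact GaussianFourier.integrable_cexp_neg_mul_sq_norm_add hτK _ v
  rw [setIntegral_epigraph_mul_cexp_neg_mul hh f hτ', hgauss,
    GaussianFourier.integral_cexp_neg_mul_sq_norm_add hτK, hv, finrank_euclideanSpace_fin, hdim,
    hexp, Complex.ofReal_mul, Complex.ofReal_mul, Complex.ofReal_cpow (by positivity),
    Complex.ofReal_exp]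
  push_cast
  ring
end

section
/- Let n ≥ 2. There exists a constant C_n > 0, depending only on n, such that for all τ > 0, h > 0, K > 0, every unit vector v̂' ∈ ℝ^{n−1}, and ξ = iτ(v̂', 0) − τe_n ∈ ℂⁿ, the function E_ξ is integrable on the region { x = (x', x_n) ∈ ℝⁿ : x_n > max(h, K|x'|²) } and |∫_{{x_n > max(h, K|x'|²)}} E_ξ(x) dx| ≤ C_n (1 + (τh)^{(n−1)/2}) τ^{−(n+1)/2} K^{−(n−1)/2} e^{−τh}. -/
/-!
Since `‖E_ξ(x)‖ = e^{-τ x_n}`, the oscillation in `x'` is discarded and the integral is bounded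
by `∫ e^{-τ x_n}` over the region; integrating out `x_n` first leaves
`τ⁻¹ ∫ e^{-τ max(h, K|x'|²)} dx'`. Where `K|x'|² ≤ 2h` the integrand is at most `e^{-τh}`, on a ball
of volume `|B₁| (2h/K)^{(n-1)/2}`; elsewhere `τK|x'|² ≥ τh + τK|x'|²/2`, so the integrand is at most
`e^{-τh} e^{-τK|x'|²/2}`, whose Gaussian integral is `(2π/(τK))^{(n-1)/2}`. Both terms scale like
`(τK)^{-(n-1)/2}`, with `(τh)^{(n-1)/2}` in the first.
-/

open MeasureTheory Set Real Metric Module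

section Epigraph

variable {α : Type*}

def strictEpigraph (φ : α → ℝ) : Set (α × ℝ) := {p | φ p.1 < p.2}

theorem indicator_strictEpigraph_apply (φ : α → ℝ) (f : ℝ → ℝ) (y : α) (s : ℝ) :
    (strictEpigraph φ).indicator (fun p => f p.2) (y, s) = (Ioi (φ y)).indicator f s :=
  rfl

variable [MeasurableSpace α] {μ : Measure α}

theorem measurableSet_strictEpigraph {φ : α → ℝ} (hφ : Measurable φ) :
    MeasurableSet (strictEpigraph φ) :=
  measurableSet_lt (hφ.comp measurable_fst) measurable_snd

theorem integral_indicator_Ioi_exp_neg_mul {τ : ℝ} (hτ : 0 < τ) (c : ℝ) :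
    ∫ s, (Ioi c).indicator (fun s => rexp (-τ * s)) s = τ⁻¹ * rexp (-τ * c) := by
  rw [integral_indicator measurableSet_Ioi, integral_exp_mul_Ioi (neg_lt_zero.2 hτ)]
  field_simp

variable {φ : α → ℝ} {τ : ℝ}

theorem integrable_indicator_strictEpigraph_exp_neg_mul (hφ : Measurable φ) (hτ : 0 < τ)
    (hint : Integrable (fun y => rexp (-τ * φ y)) μ) :
    Integrable ((strictEpigraph φ).indicator fun p => rexp (-τ * p.2)) (μ.prod volume) := by
  have hmeas : AEStronglyMeasurable ((strictEpigraph φ).indicator fun p => rexp (-τ * p.2))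
      (μ.prod volume) :=
    (Measurable.indicator (by fun_prop) (measurableSet_strictEpigraph hφ)).aestronglyMeasurable
  refine (integrable_prod_iff hmeas).2 ⟨ae_of_all _ fun y => ?_, ?_⟩
  · simp only [indicator_strictEpigraph_apply φ (fun s => rexp (-τ * s))]
    exact (integrable_indicator_iff measurableSet_Ioi).2
      (integrableOn_exp_mul_Ioi (neg_lt_zero.2 hτ) _)
  · simp only [indicator_strictEpigraph_apply φ (fun s => rexp (-τ * s)),
      norm_indicator_eq_indicator_norm, norm_of_nonneg (exp_pos _).le,
      integral_indicator_Ioi_exp_neg_mul hτ]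
    exact hint.const_mul τ⁻¹

theorem setIntegral_strictEpigraph_exp_neg_mul [SFinite μ] (hφ : Measurable φ) (hτ : 0 < τ)
    (hint : Integrable (fun y => rexp (-τ * φ y)) μ) :
    ∫ p in strictEpigraph φ, rexp (-τ * p.2) ∂(μ.prod volume) =
      τ⁻¹ * ∫ y, rexp (-τ * φ y) ∂μ := by
  rw [← integral_indicator (measurableSet_strictEpigraph hφ),
    integral_prod _ (integrable_indicator_strictEpigraph_exp_neg_mul hφ hτ hint),
    ← integral_const_mul]
  simp only [indicator_strictEpigraph_apply φ (fun s => rexp (-τ * s)),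
    integral_indicator_Ioi_exp_neg_mul hτ]

end Epigraph

section InnerProductSpace

variable {E : Type*} [NormedAddCommGroup E] {τ h K : ℝ}

theorem exp_neg_mul_max_le (hτ : 0 ≤ τ) (hK : 0 < K) (y : E) :
    rexp (-τ * max h (K * ‖y‖ ^ 2)) ≤
      rexp (-τ * h) * ((closedBall (0 : E) √(2 * h / K)).indicator 1 y
        + rexp (-(τ * K / 2) * ‖y‖ ^ 2)) := by
  by_cases hy : K * ‖y‖ ^ 2 ≤ 2 * h
  · have hball : y ∈ closedBall (0 : E) √(2 * h / K) := by
      rw [mem_closedBall_zero_iff]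
      exact le_sqrt_of_sq_le ((le_div_iff₀ hK).2 (by linarith))
    rw [indicator_of_mem hball, Pi.one_apply, mul_add, mul_one]
    have hle : rexp (-τ * max h (K * ‖y‖ ^ 2)) ≤ rexp (-τ * h) :=
      exp_le_exp.2 (mul_le_mul_of_nonpos_left (le_max_left _ _) (by linarith))
    nlinarith [exp_pos (-τ * h), exp_pos (-(τ * K / 2) * ‖y‖ ^ 2)]
  · -- here `τ K ‖y‖² ≥ τ h + τ K ‖y‖² / 2`
    have hind : 0 ≤ (closedBall (0 : E) √(2 * h / K)).indicator (1 : E → ℝ) y :=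
      indicator_nonneg (fun _ _ => zero_le_one) y
    calc rexp (-τ * max h (K * ‖y‖ ^ 2)) ≤ rexp (-τ * h) * rexp (-(τ * K / 2) * ‖y‖ ^ 2) := by
          rw [← exp_add]
          refine exp_le_exp.2 ?_
          nlinarith [le_max_right h (K * ‖y‖ ^ 2)]
      _ ≤ _ := mul_le_mul_of_nonneg_left (le_add_of_nonneg_left hind) (exp_pos _).le

variable [InnerProductSpace ℝ E] [FiniteDimensional ℝ E] [MeasurableSpace E] [BorelSpace E]

theorem integrable_exp_neg_mul_sq_norm {b : ℝ} (hb : 0 < b) :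
    Integrable fun v : E => rexp (-b * ‖v‖ ^ 2) :=
  .of_integral_ne_zero <| by rw [GaussianFourier.integral_rexp_neg_mul_sq_norm hb]; positivity

theorem integrable_indicator_closedBall_one (r : ℝ) :
    Integrable ((closedBall (0 : E) r).indicator (1 : E → ℝ)) :=
  (integrableOn_const measure_closedBall_lt_top.ne).integrable_indicator measurableSet_closedBall

theorem integrable_exp_neg_mul_max (hτ : 0 < τ) (hK : 0 < K) :
    Integrable fun y : E => rexp (-τ * max h (K * ‖y‖ ^ 2)) :=
  (((integrable_indicator_closedBall_one _).add
    (integrable_exp_neg_mul_sq_norm (b := τ * K / 2) (by positivity))).const_mul _).mono'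
    (by fun_prop) (ae_of_all _ fun y => by
      rw [norm_of_nonneg (exp_pos _).le]
      exact exp_neg_mul_max_le hτ.le hK y)

theorem integral_exp_neg_mul_max_le (hτ : 0 < τ) (hK : 0 < K) :
    ∫ y : E, rexp (-τ * max h (K * ‖y‖ ^ 2)) ≤
      rexp (-τ * h) * (√(2 * h / K) ^ finrank ℝ E * volume.real (ball (0 : E) 1)
        + (π / (τ * K / 2)) ^ (finrank ℝ E / 2 : ℝ)) := by
  have hball := integrable_indicator_closedBall_one (E := E) √(2 * h / K)
  have hgauss := integrable_exp_neg_mul_sq_norm (E := E) (b := τ * K / 2) (by positivity)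
  calc ∫ y : E, rexp (-τ * max h (K * ‖y‖ ^ 2))
      ≤ ∫ y : E, rexp (-τ * h) * ((closedBall (0 : E) √(2 * h / K)).indicator 1 y
          + rexp (-(τ * K / 2) * ‖y‖ ^ 2)) :=
        integral_mono (integrable_exp_neg_mul_max hτ hK) ((hball.add hgauss).const_mul _)
          (exp_neg_mul_max_le hτ.le hK)
    _ = _ := by
        rw [integral_const_mul, integral_add hball hgauss,
          integral_indicator_one measurableSet_closedBall,
          Measure.addHaar_real_closedBall _ _ (sqrt_nonneg _),
          GaussianFourier.integral_rexp_neg_mul_sq_norm (by positivity)]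

end InnerProductSpace

theorem inv_mul_exp_mul_sqrt_pow_add_rpow_le {m : ℕ} {ω τ h K : ℝ} (hω : 0 ≤ ω) (hτ : 0 < τ)
    (hh : 0 ≤ h) (hK : 0 < K) :
    τ⁻¹ * (rexp (-τ * h) * (√(2 * h / K) ^ m * ω + (π / (τ * K / 2)) ^ (m / 2 : ℝ))) ≤
      (2 ^ (m / 2 : ℝ) * ω + (2 * π) ^ (m / 2 : ℝ)) * (1 + (τ * h) ^ (m / 2 : ℝ))
        * τ ^ (-(m / 2 + 1 : ℝ)) * K ^ (-(m / 2 : ℝ)) * rexp (-τ * h) := by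
  set p : ℝ := m / 2
  have hτh : 0 ≤ τ * h := by positivity
  have hτK : 0 < τ * K := by positivity
  have hball : √(2 * h / K) ^ m = 2 ^ p * (τ * h) ^ p / (τ * K) ^ p := by
    rw [sqrt_eq_rpow, ← rpow_natCast, ← rpow_mul (by positivity), one_div_mul_eq_div,
      show 2 * h / K = 2 * (τ * h) / (τ * K) by field_simp, div_rpow (by positivity) hτK.le,
      mul_rpow zero_le_two hτh]
  have hgauss : (π / (τ * K / 2)) ^ p = (2 * π) ^ p / (τ * K) ^ p := by
    rw [← div_rpow (by positivity) hτK.le]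
    congr 1
    field_simp
  have hscale : τ ^ (-(p + 1)) * K ^ (-p) = τ⁻¹ / (τ * K) ^ p := by
    rw [rpow_neg hτ.le, rpow_neg hK.le, rpow_add_one hτ.ne', mul_rpow hτ.le hK.le]
    field_simp
  have hp : 0 ≤ (τ * h) ^ p := rpow_nonneg hτh p
  calc τ⁻¹ * (rexp (-τ * h) * (√(2 * h / K) ^ m * ω + (π / (τ * K / 2)) ^ p))
      = τ⁻¹ / (τ * K) ^ p * rexp (-τ * h) * (2 ^ p * ω * (τ * h) ^ p + (2 * π) ^ p) := by
        rw [hball, hgauss]; ring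
    _ ≤ τ⁻¹ / (τ * K) ^ p * rexp (-τ * h)
          * ((2 ^ p * ω + (2 * π) ^ p) * (1 + (τ * h) ^ p)) := by
        have h2 : 0 ≤ 2 ^ p * ω := by positivity
        have h2π : 0 ≤ (2 * π) ^ p := by positivity
        gcongr
        nlinarith [mul_nonneg h2 hp, mul_nonneg h2π hp]
    _ = _ := by rw [← hscale]; ring

/-- For `n ≥ 2` there is `C_n > 0`, depending only on `n`, such that for
all `τ > 0`, `h > 0`, `K > 0`, every unit vector `v̂' ∈ ℝ^{n−1}` and `ξ = iτ(v̂',0) − τe_n`,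
the function `E_ξ(x) = exp(iτ v̂'·x' − τ x_n)` is integrable on
`{x : x_n > max(h, K|x'|²)}` and
`|∫ E_ξ| ≤ C_n (1+(τh)^{(n−1)/2}) τ^{−(n+1)/2} K^{−(n−1)/2} e^{−τh}`. -/
theorem cgo_I1_estimate (n : ℕ) (hn : 2 ≤ n) :
    ∃ C : ℝ, 0 < C ∧
      ∀ (τ h K : ℝ), 0 < τ → 0 < h → 0 < K →
        ∀ (v : EuclideanSpace ℝ (Fin (n - 1))), ‖v‖ = 1 →
          MeasureTheory.IntegrableOn
            (fun x : EuclideanSpace ℝ (Fin (n - 1)) × ℝ =>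
              Complex.exp (Complex.I * (τ : ℂ) * ((inner ℝ v x.1 : ℝ) : ℂ) - (τ : ℂ) * (x.2 : ℂ)))
            {x : EuclideanSpace ℝ (Fin (n - 1)) × ℝ | max h (K * ‖x.1‖ ^ 2) < x.2} volume ∧
          norm
            (∫ x in {x : EuclideanSpace ℝ (Fin (n - 1)) × ℝ | max h (K * ‖x.1‖ ^ 2) < x.2},
              Complex.exp (Complex.I * (τ : ℂ) * ((inner ℝ v x.1 : ℝ) : ℂ) - (τ : ℂ) * (x.2 : ℂ)))
            ≤ C * (1 + (τ * h) ^ (((n : ℝ) - 1) / 2)) * τ ^ (-(((n : ℝ) + 1) / 2))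
                * K ^ (-(((n : ℝ) - 1) / 2)) * Real.exp (-τ * h) := by
  have hdim : (finrank ℝ (EuclideanSpace ℝ (Fin (n - 1))) : ℝ) = n - 1 := by
    rw [finrank_euclideanSpace_fin, Nat.cast_sub (by omega), Nat.cast_one]
  refine ⟨2 ^ (((n : ℝ) - 1) / 2) * volume.real (ball (0 : EuclideanSpace ℝ (Fin (n - 1))) 1)
    + (2 * π) ^ (((n : ℝ) - 1) / 2),
    add_pos_of_nonneg_of_pos (mul_nonneg (by positivity) measureReal_nonneg) (by positivity),
    fun τ h K hτ hh hK v _ => ?_⟩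
  set φ := fun y : EuclideanSpace ℝ (Fin (n - 1)) => max h (K * ‖y‖ ^ 2)
  have hφ : Measurable φ := by fun_prop
  have hexp := integrable_exp_neg_mul_max (E := EuclideanSpace ℝ (Fin (n - 1))) (h := h) hτ hK
  have hnorm : ∀ x : EuclideanSpace ℝ (Fin (n - 1)) × ℝ,
      ‖Complex.exp (Complex.I * τ * ((inner ℝ v x.1 : ℝ) : ℂ) - τ * x.2)‖ = rexp (-τ * x.2) := by
    intro x
    simp [Complex.norm_exp]
  have hint : IntegrableOn (fun x => rexp (-τ * x.2)) (strictEpigraph φ) :=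
    (integrable_indicator_iff (measurableSet_strictEpigraph hφ)).1
      (integrable_indicator_strictEpigraph_exp_neg_mul hφ hτ hexp)
  refine ⟨hint.mono' (by fun_prop) (ae_of_all _ fun x => (hnorm x).le), ?_⟩
  rw [show -(((n : ℝ) + 1) / 2) = -(((n : ℝ) - 1) / 2 + 1) by ring, ← hdim]
  calc _ ≤ ∫ x in strictEpigraph φ, rexp (-τ * x.2) :=
        (norm_integral_le_integral_norm _).trans_eq (by simp_rw [hnorm]; rfl)
    _ = τ⁻¹ * ∫ y, rexp (-τ * φ y) := setIntegral_strictEpigraph_exp_neg_mul hφ hτ hexp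
    _ ≤ _ :=
      (mul_le_mul_of_nonneg_left (integral_exp_neg_mul_max_le hτ hK) (by positivity)).trans
        (inv_mul_exp_mul_sqrt_pow_add_rpow_le measureReal_nonneg hτ hh.le hK)
end

section
/- Let n ≥ 2. There exists a constant C_n > 0, depending only on n, such that the following holds. Let 0 < K_− ≤ K ≤ K_+, h > 0, b > 0 with b² ≥ h/K_−, let w : ℝ^{n−1} → ℝ be measurable with K_−|x'|² ≤ w(x') ≤ K_+|x'|² for all |x'| < b, and set D_{b,h} = { x = (x', x_n) ∈ ℝⁿ : |x'| < b, w(x') < x_n < h }. Then for all τ > 0, every unit vector v̂' ∈ ℝ^{n−1}, and ξ = iτ(v̂', 0) − τe_n, one has |∫_{{K|x'|² < x_n < h}} E_ξ(x) dx − ∫_{D_{b,h}} E_ξ(x) dx| ≤ C_n (K_−^{−(n−1)/2} − K_+^{−(n−1)/2}) τ^{−(n+1)/2}. -/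
open MeasureTheory Set Real

/-! The two regions differ only inside the shell `K₋|x'|² ≤ x_n ≤ K₊|x'|²`: a point of the
paraboloid cap lies over the ball `|x'| < b` because `b² ≥ h/K₋`, where the graph of `w` is
trapped between the two paraboloids. Since `|E_ξ(x)| = e^{-τ x_n}`, the difference of the
integrals is at most the integral of `e^{-τ x_n}` over the shell, which by Fubini equals
`τ⁻¹ ∫ (e^{-τK₋|x'|²} - e^{-τK₊|x'|²}) dx'`, a difference of two Gaussian integrals in dimension
`n - 1`; this gives the constant `C_n = π^{(n-1)/2}`. -/

lemma integral_Icc_exp_neg_mul {τ a c : ℝ} (hτ : τ ≠ 0) (hac : a ≤ c) :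
    ∫ t in Icc a c, rexp (-τ * t) = (rexp (-τ * a) - rexp (-τ * c)) / τ := by
  rw [integral_Icc_eq_integral_Ioc, ← intervalIntegral.integral_of_le hac,
    intervalIntegral.integral_comp_mul_left (fun t => rexp t) (neg_ne_zero.2 hτ), integral_exp,
    smul_eq_mul]
  ring

lemma norm_setIntegral_sub_setIntegral_le_setIntegral_symmDiff {X E : Type*} [MeasurableSpace X]
    {μ : Measure X} [NormedAddCommGroup E] [NormedSpace ℝ E] {f : X → E} {s t : Set X}
    (hs : MeasurableSet s) (ht : MeasurableSet t) (hfs : IntegrableOn f s μ)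
    (hft : IntegrableOn f t μ) :
    ‖(∫ x in s, f x ∂μ) - ∫ x in t, f x ∂μ‖ ≤ ∫ x in symmDiff s t, ‖f x‖ ∂μ := by
  have hdiff : (∫ x in s, f x ∂μ) - ∫ x in t, f x ∂μ
      = (∫ x in s \ t, f x ∂μ) - ∫ x in t \ s, f x ∂μ := by
    rw [← integral_inter_add_sdiff ht hfs, ← integral_inter_add_sdiff hs hft, inter_comm]
    abel
  calc ‖(∫ x in s, f x ∂μ) - ∫ x in t, f x ∂μ‖
      ≤ ‖∫ x in s \ t, f x ∂μ‖ + ‖∫ x in t \ s, f x ∂μ‖ := hdiff ▸ norm_sub_le _ _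
    _ ≤ ∫ x in s \ t, ‖f x‖ ∂μ + ∫ x in t \ s, ‖f x‖ ∂μ :=
      add_le_add (norm_integral_le_integral_norm _) (norm_integral_le_integral_norm _)
    _ = ∫ x in symmDiff s t, ‖f x‖ ∂μ := by
      rw [Set.symmDiff_def, setIntegral_union disjoint_sdiff_sdiff (ht.diff hs)
        (hfs.mono_set sdiff_subset).norm (hft.mono_set sdiff_subset).norm]

lemma indicator_region_between_cc_slice {α : Type*} {φ ψ : α → ℝ} (g : ℝ → ℝ) (x : α) :
    (fun t => {p : α × ℝ | p.2 ∈ Icc (φ p.1) (ψ p.1)}.indicator (fun p => g p.2) (x, t))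
      = (Icc (φ x) (ψ x)).indicator g :=
  rfl

section RegionBetween

variable {α : Type*} [MeasurableSpace α] {μ : Measure α} {φ ψ : α → ℝ} {τ : ℝ}

lemma integrableOn_exp_neg_mul_region_between_cc (hφ : Measurable φ) (hψ : Measurable ψ)
    (hle : φ ≤ ψ) (hτ : τ ≠ 0)
    (hint : Integrable (fun x => rexp (-τ * φ x) - rexp (-τ * ψ x)) μ) :
    IntegrableOn (fun p : α × ℝ => rexp (-τ * p.2)) {p | p.2 ∈ Icc (φ p.1) (ψ p.1)}
      (μ.prod volume) := by
  have hR : MeasurableSet {p : α × ℝ | p.2 ∈ Icc (φ p.1) (ψ p.1)} := by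
    simpa using measurableSet_region_between_cc hφ hψ MeasurableSet.univ
  rw [← integrable_indicator_iff hR, integrable_prod_iff
    ((measurable_snd.const_mul (-τ)).exp.aestronglyMeasurable.indicator hR)]
  refine ⟨ae_of_all _ fun x => ?_, (hint.div_const τ).congr (ae_of_all _ fun x => ?_)⟩
  · rw [indicator_region_between_cc_slice (fun t => rexp (-τ * t)),
      integrable_indicator_iff measurableSet_Icc]
    exact (by fun_prop : Continuous fun t : ℝ => rexp (-τ * t)).integrableOn_Icc
  · simp only [norm_indicator_eq_indicator_norm, Real.norm_eq_abs, abs_exp]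
    rw [indicator_region_between_cc_slice (fun t => rexp (-τ * t)),
      integral_indicator measurableSet_Icc, integral_Icc_exp_neg_mul hτ (hle x)]

lemma setIntegral_exp_neg_mul_region_between_cc [SFinite μ] (hφ : Measurable φ)
    (hψ : Measurable ψ) (hle : φ ≤ ψ) (hτ : τ ≠ 0)
    (hint : Integrable (fun x => rexp (-τ * φ x) - rexp (-τ * ψ x)) μ) :
    ∫ p in {p : α × ℝ | p.2 ∈ Icc (φ p.1) (ψ p.1)}, rexp (-τ * p.2) ∂(μ.prod volume)
      = ∫ x, (rexp (-τ * φ x) - rexp (-τ * ψ x)) / τ ∂μ := by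
  have hR : MeasurableSet {p : α × ℝ | p.2 ∈ Icc (φ p.1) (ψ p.1)} := by
    simpa using measurableSet_region_between_cc hφ hψ MeasurableSet.univ
  rw [← integral_indicator hR, integral_prod _ ((integrable_indicator_iff hR).2
    (integrableOn_exp_neg_mul_region_between_cc hφ hψ hle hτ hint))]
  congr 1 with x
  rw [indicator_region_between_cc_slice (fun t => rexp (-τ * t)),
    integral_indicator measurableSet_Icc, integral_Icc_exp_neg_mul hτ (hle x)]

end RegionBetween

section Gaussian

variable {V : Type*} [NormedAddCommGroup V] [InnerProductSpace ℝ V] [FiniteDimensional ℝ V]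
  [MeasurableSpace V] [BorelSpace V] {τ k : ℝ}

lemma integral_exp_neg_mul_mul_sq_norm (hτ : 0 < τ) (hk : 0 < k) :
    ∫ v : V, rexp (-τ * (k * ‖v‖ ^ 2))
      = π ^ ((Module.finrank ℝ V : ℝ) / 2) * τ ^ (-((Module.finrank ℝ V : ℝ) / 2))
        * k ^ (-((Module.finrank ℝ V : ℝ) / 2)) := by
  simp_rw [show ∀ s : ℝ, -τ * (k * s) = -(τ * k) * s from fun s => by ring]
  rw [GaussianFourier.integral_rexp_neg_mul_sq_norm (mul_pos hτ hk),
    div_rpow pi_pos.le (mul_pos hτ hk).le, mul_rpow hτ.le hk.le, rpow_neg hτ.le, rpow_neg hk.le]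
  ring

lemma integrable_exp_neg_mul_mul_sq_norm (hτ : 0 < τ) (hk : 0 < k) :
    Integrable fun v : V => rexp (-τ * (k * ‖v‖ ^ 2)) :=
  Integrable.of_integral_ne_zero <| by
    rw [integral_exp_neg_mul_mul_sq_norm hτ hk]; positivity

lemma integral_exp_neg_mul_mul_sq_norm_sub_div {a c : ℝ} (hτ : 0 < τ) (ha : 0 < a)
    (hc : 0 < c) :
    ∫ v : V, (rexp (-τ * (a * ‖v‖ ^ 2)) - rexp (-τ * (c * ‖v‖ ^ 2))) / τ
      = π ^ ((Module.finrank ℝ V : ℝ) / 2)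
        * (a ^ (-((Module.finrank ℝ V : ℝ) / 2)) - c ^ (-((Module.finrank ℝ V : ℝ) / 2)))
        * τ ^ (-((Module.finrank ℝ V : ℝ) / 2) - 1) := by
  rw [integral_div, integral_sub (integrable_exp_neg_mul_mul_sq_norm hτ ha)
    (integrable_exp_neg_mul_mul_sq_norm hτ hc), integral_exp_neg_mul_mul_sq_norm hτ ha,
    integral_exp_neg_mul_mul_sq_norm hτ hc, rpow_sub_one hτ.ne']
  ring

end Gaussian

lemma norm_cexp_I_mul_ofReal_sub_ofReal_mul (τ r t : ℝ) :
    ‖Complex.exp (Complex.I * (τ : ℂ) * (r : ℂ) - (τ : ℂ) * (t : ℂ))‖ = rexp (-τ * t) := by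
  rw [Complex.norm_exp]
  simp

section Paraboloids

variable {E : Type*} [SeminormedAddCommGroup E]

def paraboloidCap (K h : ℝ) : Set (E × ℝ) :=
  {x | K * ‖x.1‖ ^ 2 < x.2 ∧ x.2 < h}

/-- The region `D_{b,h}` of the paper. -/
def graphCap (w : E → ℝ) (b h : ℝ) : Set (E × ℝ) :=
  {x | ‖x.1‖ < b ∧ w x.1 < x.2 ∧ x.2 < h}

variable {Km K Kp h b : ℝ} {w : E → ℝ}

lemma norm_lt_of_mul_norm_sq_lt (hKm : 0 < Km) (hKmK : Km ≤ K) (hb : 0 ≤ b)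
    (hbsq : h / Km ≤ b ^ 2) {x : E} (hx : K * ‖x‖ ^ 2 < h) : ‖x‖ < b := by
  have hKm_x : Km * ‖x‖ ^ 2 < h := by nlinarith [sq_nonneg ‖x‖]
  exact lt_of_pow_lt_pow_left₀ 2 hb (((lt_div_iff₀' hKm).2 hKm_x).trans_le hbsq)

lemma symmDiff_paraboloidCap_graphCap_subset (hKm : 0 < Km) (hKmK : Km ≤ K) (hKKp : K ≤ Kp)
    (hb : 0 ≤ b) (hbsq : h / Km ≤ b ^ 2)
    (hw : ∀ x : E, ‖x‖ < b → Km * ‖x‖ ^ 2 ≤ w x ∧ w x ≤ Kp * ‖x‖ ^ 2) :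
    symmDiff (paraboloidCap K h) (graphCap w b h)
      ⊆ {p : E × ℝ | p.2 ∈ Icc (Km * ‖p.1‖ ^ 2) (Kp * ‖p.1‖ ^ 2)} := by
  rintro ⟨x, t⟩ (⟨⟨hKt, hth⟩, hnD⟩ | ⟨⟨hxb, hwt, hth⟩, hnA⟩)
  · have hxb := norm_lt_of_mul_norm_sq_lt hKm hKmK hb hbsq (hKt.trans hth)
    have htw : t ≤ w x := not_lt.1 fun hwt => hnD ⟨hxb, hwt, hth⟩
    exact ⟨by nlinarith [sq_nonneg ‖x‖], htw.trans (hw x hxb).2⟩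
  · have htK : t ≤ K * ‖x‖ ^ 2 := not_lt.1 fun hKt => hnA ⟨hKt, hth⟩
    exact ⟨(hw x hxb).1.trans hwt.le, by nlinarith [sq_nonneg ‖x‖]⟩

lemma paraboloidCap_union_graphCap_subset (hKm : 0 < Km) (hKmK : Km ≤ K) (hb : 0 ≤ b)
    (hbsq : h / Km ≤ b ^ 2) (hw : ∀ x : E, ‖x‖ < b → Km * ‖x‖ ^ 2 ≤ w x) :
    paraboloidCap K h ∪ graphCap w b h ⊆ Metric.closedBall 0 b ×ˢ Icc 0 h := by
  rintro ⟨x, t⟩ (⟨hKt, hth⟩ | ⟨hxb, hwt, hth⟩)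
  · refine ⟨mem_closedBall_zero_iff.2 (norm_lt_of_mul_norm_sq_lt hKm hKmK hb hbsq
      (hKt.trans hth)).le, ?_, hth.le⟩
    nlinarith [sq_nonneg ‖x‖]
  · refine ⟨mem_closedBall_zero_iff.2 hxb.le, ?_, hth.le⟩
    nlinarith [sq_nonneg ‖x‖, hw x hxb]

end Paraboloids

theorem norm_setIntegral_paraboloidCap_sub_setIntegral_graphCap_le {E F : Type*}
    [NormedAddCommGroup E] [InnerProductSpace ℝ E] [FiniteDimensional ℝ E] [MeasurableSpace E]
    [BorelSpace E] [NormedAddCommGroup F] [NormedSpace ℝ F] {Km K Kp h b τ : ℝ} {w : E → ℝ}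
    {f : E × ℝ → F} (hKm : 0 < Km) (hKmK : Km ≤ K) (hKKp : K ≤ Kp) (hb : 0 ≤ b)
    (hbsq : h / Km ≤ b ^ 2) (hw : Measurable w)
    (hwb : ∀ x : E, ‖x‖ < b → Km * ‖x‖ ^ 2 ≤ w x ∧ w x ≤ Kp * ‖x‖ ^ 2) (hτ : 0 < τ)
    (hf : Continuous f) (hf_le : ∀ x, ‖f x‖ ≤ rexp (-τ * x.2)) :
    ‖(∫ x in paraboloidCap K h, f x) - ∫ x in graphCap w b h, f x‖
      ≤ π ^ ((Module.finrank ℝ E : ℝ) / 2)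
        * (Km ^ (-((Module.finrank ℝ E : ℝ) / 2)) - Kp ^ (-((Module.finrank ℝ E : ℝ) / 2)))
        * τ ^ (-((Module.finrank ℝ E : ℝ) / 2) - 1) := by
  have hA : MeasurableSet (paraboloidCap (E := E) K h) :=
    (measurableSet_lt (by fun_prop) measurable_snd).inter
      (measurableSet_lt measurable_snd measurable_const)
  have hB : MeasurableSet (graphCap w b h) :=
    (measurableSet_lt measurable_fst.norm measurable_const).inter
      ((measurableSet_lt (hw.comp measurable_fst) measurable_snd).inter
        (measurableSet_lt measurable_snd measurable_const))
  have hf_box : IntegrableOn f (Metric.closedBall 0 b ×ˢ Icc 0 h) :=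
    hf.continuousOn.integrableOn_compact ((isCompact_closedBall _ _).prod isCompact_Icc)
  have hAB := paraboloidCap_union_graphCap_subset hKm hKmK hb hbsq fun x hx => (hwb x hx).1
  have hle : (fun x : E => Km * ‖x‖ ^ 2) ≤ fun x => Kp * ‖x‖ ^ 2 :=
    fun x => by nlinarith [sq_nonneg ‖x‖]
  have hKp : 0 < Kp := hKm.trans_le (hKmK.trans hKKp)
  have hgauss := (integrable_exp_neg_mul_mul_sq_norm (V := E) hτ hKm).sub
    (integrable_exp_neg_mul_mul_sq_norm hτ hKp)
  have hR :=
    integrableOn_exp_neg_mul_region_between_cc (by fun_prop) (by fun_prop) hle hτ.ne' hgauss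
  have hsub := symmDiff_paraboloidCap_graphCap_subset hKm hKmK hKKp hb hbsq hwb
  calc ‖(∫ x in paraboloidCap K h, f x) - ∫ x in graphCap w b h, f x‖
      ≤ ∫ x in symmDiff (paraboloidCap K h) (graphCap w b h), ‖f x‖ :=
        norm_setIntegral_sub_setIntegral_le_setIntegral_symmDiff hA hB
          (hf_box.mono_set (subset_union_left.trans hAB))
          (hf_box.mono_set (subset_union_right.trans hAB))
    _ ≤ ∫ x in symmDiff (paraboloidCap K h) (graphCap w b h), rexp (-τ * x.2) :=
        integral_mono_of_nonneg (ae_of_all _ fun _ => norm_nonneg _) (hR.mono_set hsub)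
          (ae_of_all _ hf_le)
    _ ≤ ∫ x in {p : E × ℝ | p.2 ∈ Icc (Km * ‖p.1‖ ^ 2) (Kp * ‖p.1‖ ^ 2)}, rexp (-τ * x.2) :=
        setIntegral_mono_set hR (ae_of_all _ fun _ => (exp_pos _).le) hsub.eventuallyLE
    _ = ∫ x : E, (rexp (-τ * (Km * ‖x‖ ^ 2)) - rexp (-τ * (Kp * ‖x‖ ^ 2))) / τ :=
        setIntegral_exp_neg_mul_region_between_cc (by fun_prop) (by fun_prop) hle hτ.ne' hgauss
    _ = _ := integral_exp_neg_mul_mul_sq_norm_sub_div hτ hKm hKp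

/-- For `n ≥ 2` there is `C_n > 0` depending only on `n` such that:
for `0 < K_− ≤ K ≤ K_+`, `h > 0`, `b > 0` with `b² ≥ h/K_−`, any measurable
`w : ℝ^{n−1} → ℝ` with `K_−|x'|² ≤ w(x') ≤ K_+|x'|²` for `|x'| < b`, and
`D_{b,h} = {x : |x'| < b, w(x') < x_n < h}`, one has for all `τ > 0`, unit `v̂'`,
`ξ = iτ(v̂',0) − τe_n`:
`|∫_{K|x'|² < x_n < h} E_ξ − ∫_{D_{b,h}} E_ξ| ≤ C_n (K_−^{−(n−1)/2} − K_+^{−(n−1)/2}) τ^{−(n+1)/2}`. -/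
theorem cgo_I2_estimate (n : ℕ) (hn : 2 ≤ n) :
    ∃ C : ℝ, 0 < C ∧
      ∀ (Km K Kp h b : ℝ), 0 < Km → Km ≤ K → K ≤ Kp → 0 < h → 0 < b →
        h / Km ≤ b ^ 2 →
        ∀ w : EuclideanSpace ℝ (Fin (n - 1)) → ℝ, Measurable w →
          (∀ x' : EuclideanSpace ℝ (Fin (n - 1)), ‖x'‖ < b →
            Km * ‖x'‖ ^ 2 ≤ w x' ∧ w x' ≤ Kp * ‖x'‖ ^ 2) →
        ∀ τ : ℝ, 0 < τ →
        ∀ v : EuclideanSpace ℝ (Fin (n - 1)), ‖v‖ = 1 →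
          ‖((∫ x in {x : EuclideanSpace ℝ (Fin (n - 1)) × ℝ | K * ‖x.1‖ ^ 2 < x.2 ∧ x.2 < h},
                Complex.exp (Complex.I * (τ : ℂ) * ((inner ℝ v x.1 : ℝ) : ℂ) - (τ : ℂ) * (x.2 : ℂ)))
              - ∫ x in {x : EuclideanSpace ℝ (Fin (n - 1)) × ℝ | ‖x.1‖ < b ∧ w x.1 < x.2 ∧ x.2 < h},
                Complex.exp (Complex.I * (τ : ℂ) * ((inner ℝ v x.1 : ℝ) : ℂ) - (τ : ℂ) * (x.2 : ℂ)))‖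
            ≤ C * (Km ^ (-(((n : ℝ) - 1) / 2)) - Kp ^ (-(((n : ℝ) - 1) / 2)))
                * τ ^ (-(((n : ℝ) + 1) / 2)) := by
  refine ⟨π ^ (((n : ℝ) - 1) / 2), by positivity, ?_⟩
  intro Km K Kp h b hKm hKmK hKKp _ hb hbsq w hw hwb τ hτ v _
  have hdim :
      (Module.finrank ℝ (EuclideanSpace ℝ (Fin (n - 1))) : ℝ) / 2 = ((n : ℝ) - 1) / 2 := by
    rw [finrank_euclideanSpace_fin, Nat.cast_sub (by omega), Nat.cast_one]
  rw [show -(((n : ℝ) + 1) / 2) = -(((n : ℝ) - 1) / 2) - 1 by ring, ← hdim]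
  exact norm_setIntegral_paraboloidCap_sub_setIntegral_graphCap_le hKm hKmK hKKp hb.le hbsq hw hwb
    hτ (by fun_prop) fun x => (norm_cexp_I_mul_ofReal_sub_ofReal_mul τ (inner ℝ v x.1) x.2).le
end

section
/- Let n ≥ 2, 0 < α ≤ 1, δ > 0, L > 0, M ≥ 1, μ ∈ ℝ, and C₀ > 0, and set m = (n−1)/2. There exists a constant E > 0, depending only on n, α, δ, L, M, and C₀, such that the following holds. Let K ≥ 3, set h = 1/K, and let K_−, K_+ satisfy 0 < K_− ≤ K ≤ K_+, K/M ≤ K_−, K_+ ≤ MK, and K_+ − K_− ≤ L K^{1−δ}. Suppose g₀ ≥ 0 and Λ > 0 are such that for every τ > 0, C₀ g₀ ≤ Λ K^μ (1 + (τh)^m) e^{τ(1/(4K) − h)} + Λ K^μ ((K/K_−)^m − (K/K_+)^m) e^{τ/(4K)} + Λ K^μ (h + K_−^{−1})^{α/2} h^{(n+1+α)/2} (K/K_−)^m τ^{(n+1)/2} e^{τ/(4K)} + Λ K^μ h^{α+m} (K/K_−)^m (1 + τh) τ^m e^{τ(1/(4K) − h)}. Then g₀ ≤ E Λ (ln K)^{(n+1)/2}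 K^{μ − min(α,δ)/2}. -/
/-- Auxiliary: for `0 < s ≤ 1` and `0 ≤ p`, `1 - s ^ p ≤ (p + 1) * (1 - s)`. -/
lemma aux_one_sub_rpow {s p : ℝ} (hs0 : 0 < s) (hs1 : s ≤ 1) (hp : 0 ≤ p) :
    1 - s ^ p ≤ (p + 1) * (1 - s) := by
  rcases le_total p 1 with hp1 | hp1
  · have h : s ^ (1:ℝ) ≤ s ^ p := Real.rpow_le_rpow_of_exponent_ge hs0 hs1 hp1
    rw [Real.rpow_one] at h
    nlinarith
  · have h := one_add_mul_self_le_rpow_one_add (s := s - 1) (by linarith) hp1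
    have h2 : (1 : ℝ) + (s - 1) = s := by ring
    rw [h2] at h
    nlinarith

set_option maxHeartbeats 2000000 in
/-- The optimization-in-`τ` argument of Theorem 3.4, with
`m = (n−1)/2` and `h = 1/K`: if for every `τ > 0`,
`C₀ g₀ ≤ Λ K^μ (1+(τh)^m) e^{τ(1/(4K)−h)} + Λ K^μ ((K/K_−)^m − (K/K_+)^m) e^{τ/(4K)}`
`  + Λ K^μ (h+K_−^{−1})^{α/2} h^{(n+1+α)/2} (K/K_−)^m τ^{(n+1)/2} e^{τ/(4K)}`
`  + Λ K^μ h^{α+m} (K/K_−)^m (1+τh) τ^m e^{τ(1/(4K)−h)}`,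
then `g₀ ≤ E Λ (ln K)^{(n+1)/2} K^{μ − min(α,δ)/2}` for a constant `E > 0` depending
only on `n, α, δ, L, M, C₀`. -/
theorem gradient_decay_estimate (n : ℕ) (hn : 2 ≤ n) (α δ L M μ C₀ : ℝ)
    (hα0 : 0 < α) (hα1 : α ≤ 1) (hδ : 0 < δ) (hL : 0 < L) (hM : 1 ≤ M) (hC₀ : 0 < C₀) :
    ∃ E : ℝ, 0 < E ∧
      ∀ (K h Km Kp g₀ Λ : ℝ), 3 ≤ K → h = 1 / K →
        0 < Km → Km ≤ K → K ≤ Kp → K / M ≤ Km → Kp ≤ M * K →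
        Kp - Km ≤ L * K ^ (1 - δ) → 0 ≤ g₀ → 0 < Λ →
        (∀ τ : ℝ, 0 < τ →
          C₀ * g₀ ≤
            Λ * K ^ μ * (1 + (τ * h) ^ (((n : ℝ) - 1) / 2))
                * Real.exp (τ * (1 / (4 * K) - h))
              + Λ * K ^ μ * ((K / Km) ^ (((n : ℝ) - 1) / 2) - (K / Kp) ^ (((n : ℝ) - 1) / 2))
                  * Real.exp (τ / (4 * K))
              + Λ * K ^ μ * (h + Km⁻¹) ^ (α / 2) * h ^ (((n : ℝ) + 1 + α) / 2)
                  * (K / Km) ^ (((n : ℝ) - 1) / 2) * τ ^ (((n : ℝ) + 1) / 2)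
                  * Real.exp (τ / (4 * K))
              + Λ * K ^ μ * h ^ (α + ((n : ℝ) - 1) / 2) * (K / Km) ^ (((n : ℝ) - 1) / 2)
                  * (1 + τ * h) * τ ^ (((n : ℝ) - 1) / 2)
                  * Real.exp (τ * (1 / (4 * K) - h))) →
        g₀ ≤ E * Λ * (Real.log K) ^ (((n : ℝ) + 1) / 2) * K ^ (μ - min α δ / 2) := by
  have hn2 : (2:ℝ) ≤ (n:ℝ) := by exact_mod_cast hn
  set m : ℝ := ((n:ℝ) - 1) / 2 with hmdef
  set q : ℝ := ((n:ℝ) + 1) / 2 with hqdef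
  have hm0 : 0 ≤ m := by rw [hmdef]; linarith
  have hq0 : 0 ≤ q := by rw [hqdef]; linarith
  have hmq : q = m + 1 := by rw [hmdef, hqdef]; ring
  set ρ : ℝ := min α δ / 2 with hρdef
  have hmin0 : 0 < min α δ := lt_min hα0 hδ
  have hρ0 : 0 < ρ := by rw [hρdef]; linarith
  have hρα : 2 * ρ ≤ α := by
    have := min_le_left α δ; rw [hρdef]; linarith
  have hρδ : 2 * ρ ≤ δ := by
    have := min_le_right α δ; rw [hρdef]; linarith
  have hρ2 : 4 * ρ ≤ 2 := by linarith
  set c1 : ℝ := 1 + 2 ^ m with hc1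
  set c2 : ℝ := (m + 1) * M ^ (m + 1) * L with hc2
  set c3 : ℝ := (1 + M) ^ (α / 2) * M ^ m * 2 ^ q with hc3
  set c4 : ℝ := 3 * M ^ m * 2 ^ m with hc4
  have hM0 : (0:ℝ) < M := by linarith
  have hc1p : 0 < c1 := by rw [hc1]; positivity
  have hc2p : 0 < c2 := by rw [hc2]; positivity
  have hc3p : 0 < c3 := by rw [hc3]; positivity
  have hc4p : 0 < c4 := by rw [hc4]; positivity
  refine ⟨(c1 + c2 + c3 + c4) / C₀, by positivity, ?_⟩
  intro K h Km Kp g₀ Λ hK3 hh hKm0 hKmK hKKp hKM hKpM hKpKm hg₀ hΛ hyp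
  subst hh
  have hK0 : (0:ℝ) < K := by linarith
  have hK1 : (1:ℝ) ≤ K := by linarith
  have hKp0 : (0:ℝ) < Kp := lt_of_lt_of_le hK0 hKKp
  set lK : ℝ := Real.log K with hlKdef
  have hlK1 : 1 ≤ lK := by
    rw [hlKdef]
    have h3 : Real.exp 1 ≤ K :=
      le_trans (le_of_lt (lt_of_lt_of_le Real.exp_one_lt_d9 (by norm_num))) hK3
    calc (1:ℝ) = Real.log (Real.exp 1) := (Real.log_exp 1).symm
      _ ≤ Real.log K := Real.log_le_log (Real.exp_pos 1) h3
  have hlK0 : 0 < lK := by linarith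
  set τ : ℝ := 4 * ρ * K * lK with hτdef
  have hτ0 : 0 < τ := by rw [hτdef]; positivity
  -- exponential identities
  have e1 : Real.exp (τ * (1 / (4 * K) - 1 / K)) = K ^ (-(3 * ρ)) := by
    rw [Real.rpow_def_of_pos hK0, hτdef]
    congr 1
    field_simp
    ring
  have e2 : Real.exp (τ / (4 * K)) = K ^ ρ := by
    rw [Real.rpow_def_of_pos hK0, hτdef]
    congr 1
    field_simp
    ring
  have e3 : τ * (1 / K) = 4 * ρ * lK := by
    rw [hτdef]; field_simp
  have hyp' := hyp τ hτ0
  rw [e1, e2, e3] at hyp'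
  -- common bounds
  have hKμ0 : (0:ℝ) < K ^ μ := Real.rpow_pos_of_pos hK0 μ
  have hlKq1 : (1:ℝ) ≤ lK ^ q := Real.one_le_rpow hlK1 hq0
  have hlKm1 : (1:ℝ) ≤ lK ^ m := Real.one_le_rpow hlK1 hm0
  have hlKmq : lK ^ m ≤ lK ^ q :=
    Real.rpow_le_rpow_of_exponent_le hlK1 (by rw [hmq]; linarith)
  have hτle : τ ≤ 2 * (K * lK) := by
    rw [hτdef]
    calc 4 * ρ * K * lK = 4 * ρ * (K * lK) := by ring
      _ ≤ 2 * (K * lK) := mul_le_mul_of_nonneg_right hρ2 (by positivity)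
  have hτm : τ ^ m ≤ 2 ^ m * (K ^ m * lK ^ m) := by
    calc τ ^ m ≤ (2 * (K * lK)) ^ m := Real.rpow_le_rpow hτ0.le hτle hm0
      _ = 2 ^ m * (K * lK) ^ m := Real.mul_rpow (by norm_num) (by positivity)
      _ = 2 ^ m * (K ^ m * lK ^ m) := by rw [Real.mul_rpow hK0.le hlK0.le]
  have hτq : τ ^ q ≤ 2 ^ q * (K ^ q * lK ^ q) := by
    calc τ ^ q ≤ (2 * (K * lK)) ^ q := Real.rpow_le_rpow hτ0.le hτle hq0
      _ = 2 ^ q * (K * lK) ^ q := Real.mul_rpow (by norm_num) (by positivity)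
      _ = 2 ^ q * (K ^ q * lK ^ q) := by rw [Real.mul_rpow hK0.le hlK0.le]
  have hinv : ∀ z : ℝ, (1 / K) ^ z = K ^ (-z) := fun z => by
    rw [one_div, Real.inv_rpow hK0.le, ← Real.rpow_neg hK0.le]
  have hxM : K / Km ≤ M := by
    rw [div_le_iff₀ hKm0]
    have : K / M ≤ Km := hKM
    calc K = M * (K / M) := by field_simp
      _ ≤ M * Km := mul_le_mul_of_nonneg_left hKM hM0.le
  have hx0 : 0 < K / Km := by positivity
  have hxm : (K / Km) ^ m ≤ M ^ m := Real.rpow_le_rpow hx0.le hxM hm0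
  set B : ℝ := Λ * (K ^ μ * (lK ^ q * K ^ (-ρ))) with hB
  -- Term 1
  have hb1 : Λ * K ^ μ * (1 + (4 * ρ * lK) ^ m) * K ^ (-(3 * ρ)) ≤ c1 * B := by
    have h41 : (4 * ρ * lK) ^ m ≤ 2 ^ m * lK ^ m := by
      calc (4 * ρ * lK) ^ m ≤ (2 * lK) ^ m := by
            apply Real.rpow_le_rpow (by positivity) _ hm0
            calc 4 * ρ * lK = 4 * ρ * lK := rfl
              _ ≤ 2 * lK := mul_le_mul_of_nonneg_right hρ2 hlK0.le
        _ = 2 ^ m * lK ^ m := Real.mul_rpow (by norm_num) hlK0.le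
    have hmid : 1 + (4 * ρ * lK) ^ m ≤ c1 * lK ^ q := by
      have h2 : (4 * ρ * lK) ^ m ≤ 2 ^ m * lK ^ q :=
        le_trans h41 (mul_le_mul_of_nonneg_left hlKmq (by positivity))
      calc 1 + (4 * ρ * lK) ^ m ≤ lK ^ q + 2 ^ m * lK ^ q := add_le_add hlKq1 h2
        _ = c1 * lK ^ q := by rw [hc1]; ring
    have hKρ : K ^ (-(3 * ρ)) ≤ K ^ (-ρ) :=
      Real.rpow_le_rpow_of_exponent_le hK1 (by linarith)
    calc Λ * K ^ μ * (1 + (4 * ρ * lK) ^ m) * K ^ (-(3 * ρ))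
        ≤ Λ * K ^ μ * (c1 * lK ^ q) * K ^ (-ρ) := by
          apply mul_le_mul (mul_le_mul_of_nonneg_left hmid (by positivity)) hKρ
            (by positivity) (by positivity)
      _ = c1 * B := by rw [hB]; ring
  -- Term 2
  have hb2 : Λ * K ^ μ * ((K / Km) ^ m - (K / Kp) ^ m) * K ^ ρ ≤ c2 * B := by
    set x : ℝ := K / Km with hxdef
    set y : ℝ := K / Kp with hydef
    have hy0 : 0 < y := by rw [hydef]; positivity
    have hx1 : 1 ≤ x := by rw [hxdef, le_div_iff₀ hKm0]; linarith
    have hyx : y ≤ x := by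
      rw [hxdef, hydef]
      apply div_le_div_of_nonneg_left hK0.le hKm0 (le_trans hKmK hKKp)
    set s : ℝ := y / x with hsdef
    have hx0' : 0 < x := by linarith
    have hs0 : 0 < s := by rw [hsdef]; positivity
    have hs1 : s ≤ 1 := by rw [hsdef, div_le_one hx0']; exact hyx
    have hys : y = x * s := by rw [hsdef]; field_simp
    have hdiff : x ^ m - y ^ m = x ^ m * (1 - s ^ m) := by
      rw [hys, Real.mul_rpow hx0'.le hs0.le]; ring
    have haux := aux_one_sub_rpow hs0 hs1 hm0
    have h1s : 1 - s ≤ x - y := by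
      have hse : 1 - s = (x - y) / x := by rw [hsdef]; field_simp
      rw [hse]
      exact div_le_self (by linarith) hx1
    have hxy : x - y ≤ L * M * K ^ (-δ) := by
      have hexy : x - y = K * (Kp - Km) / (Km * Kp) := by
        rw [hxdef, hydef]; field_simp
      have hnum : K * (Kp - Km) ≤ K * (L * K ^ (1 - δ)) :=
        mul_le_mul_of_nonneg_left hKpKm hK0.le
      have hden : K * K / M ≤ Km * Kp := by
        have : K / M * K ≤ Km * Kp :=
          mul_le_mul hKM hKKp hK0.le hKm0.le
        calc K * K / M = K / M * K := by ring
          _ ≤ Km * Kp := this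
      have hsplit : K ^ ((1:ℝ) - δ) = K * K ^ (-δ) := by
        have he : (1:ℝ) - δ = 1 + (-δ) := by ring
        rw [he, Real.rpow_add hK0, Real.rpow_one]
      calc x - y = K * (Kp - Km) / (Km * Kp) := hexy
        _ ≤ K * (L * K ^ (1 - δ)) / (K * K / M) := by
            apply div_le_div₀ (by positivity) hnum (by positivity) hden
        _ = L * M * K ^ (-δ) := by
            rw [hsplit]; field_simp
      -- end hxy
    have hMsplit : M ^ (m + 1) = M ^ m * M := by
      rw [Real.rpow_add hM0, Real.rpow_one]
    have hkey : x ^ m - y ^ m ≤ c2 * K ^ (-δ) := by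
      have hxmM : x ^ m ≤ M ^ m := Real.rpow_le_rpow hx0'.le (by rw [hxdef]; exact hxM) hm0
      have h1 : 1 - s ^ m ≤ (m + 1) * (x - y) := by
        calc 1 - s ^ m ≤ (m + 1) * (1 - s) := haux
          _ ≤ (m + 1) * (x - y) := by
              apply mul_le_mul_of_nonneg_left h1s (by linarith)
      have h1nn : 0 ≤ 1 - s ^ m := by
        have : s ^ m ≤ 1 := Real.rpow_le_one hs0.le hs1 hm0
        linarith
      calc x ^ m - y ^ m = x ^ m * (1 - s ^ m) := hdiff
        _ ≤ M ^ m * ((m + 1) * (L * M * K ^ (-δ))) := by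
            apply mul_le_mul hxmM _ h1nn (by positivity)
            calc 1 - s ^ m ≤ (m + 1) * (x - y) := h1
              _ ≤ (m + 1) * (L * M * K ^ (-δ)) := by
                  apply mul_le_mul_of_nonneg_left hxy (by linarith)
        _ = c2 * K ^ (-δ) := by rw [hc2, hMsplit]; ring
    have hKρδ : K ^ (-δ) * K ^ ρ ≤ K ^ (-ρ) := by
      rw [← Real.rpow_add hK0]
      exact Real.rpow_le_rpow_of_exponent_le hK1 (by linarith)
    calc Λ * K ^ μ * (x ^ m - y ^ m) * K ^ ρ
        ≤ Λ * K ^ μ * (c2 * K ^ (-δ)) * K ^ ρ := by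
          apply mul_le_mul_of_nonneg_right _ (by positivity)
          exact mul_le_mul_of_nonneg_left hkey (by positivity)
      _ = c2 * (Λ * (K ^ μ * (K ^ (-δ) * K ^ ρ))) := by ring
      _ ≤ c2 * (Λ * (K ^ μ * K ^ (-ρ))) := by
          apply mul_le_mul_of_nonneg_left _ hc2p.le
          apply mul_le_mul_of_nonneg_left _ hΛ.le
          exact mul_le_mul_of_nonneg_left hKρδ hKμ0.le
      _ ≤ c2 * B := by
          rw [hB]
          apply mul_le_mul_of_nonneg_left _ hc2p.le
          apply mul_le_mul_of_nonneg_left _ hΛ.le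
          apply mul_le_mul_of_nonneg_left _ hKμ0.le
          exact le_mul_of_one_le_left (by positivity) hlKq1
  -- Term 3
  have hb3 : Λ * K ^ μ * (1 / K + Km⁻¹) ^ (α / 2) * (1 / K) ^ (((n:ℝ) + 1 + α) / 2)
      * (K / Km) ^ m * τ ^ q * K ^ ρ ≤ c3 * B := by
    have hKminv : Km⁻¹ ≤ M / K := by
      have h1 : Km⁻¹ ≤ (K / M)⁻¹ := by
        apply inv_anti₀ (by positivity) hKM
      calc Km⁻¹ ≤ (K / M)⁻¹ := h1
        _ = M / K := by rw [inv_div]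
    have hsum : 1 / K + Km⁻¹ ≤ (1 + M) * (1 / K) := by
      have : M / K = M * (1 / K) := by ring
      calc 1 / K + Km⁻¹ ≤ 1 / K + M / K := by linarith
        _ = (1 + M) * (1 / K) := by ring
    have hfac1 : (1 / K + Km⁻¹) ^ (α / 2) ≤ (1 + M) ^ (α / 2) * K ^ (-(α / 2)) := by
      calc (1 / K + Km⁻¹) ^ (α / 2) ≤ ((1 + M) * (1 / K)) ^ (α / 2) := by
            apply Real.rpow_le_rpow (by positivity) hsum (by positivity)
        _ = (1 + M) ^ (α / 2) * (1 / K) ^ (α / 2) :=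
            Real.mul_rpow (by positivity) (by positivity)
        _ = (1 + M) ^ (α / 2) * K ^ (-(α / 2)) := by rw [hinv]
    have hfac2 : (1 / K) ^ (((n:ℝ) + 1 + α) / 2) = K ^ (-(q + α / 2)) := by
      rw [hinv]
      congr 1
      rw [hqdef]; ring
    calc Λ * K ^ μ * (1 / K + Km⁻¹) ^ (α / 2) * (1 / K) ^ (((n:ℝ) + 1 + α) / 2)
          * (K / Km) ^ m * τ ^ q * K ^ ρ
        ≤ Λ * K ^ μ * ((1 + M) ^ (α / 2) * K ^ (-(α / 2))) * K ^ (-(q + α / 2))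
          * M ^ m * (2 ^ q * (K ^ q * lK ^ q)) * K ^ ρ := by
          rw [hfac2]
          apply mul_le_mul_of_nonneg_right _ (by positivity)
          apply mul_le_mul _ hτq (by positivity) (by positivity)
          apply mul_le_mul _ hxm (by positivity) (by positivity)
          apply mul_le_mul_of_nonneg_right _ (by positivity)
          exact mul_le_mul_of_nonneg_left hfac1 (by positivity)
      _ = c3 * (Λ * (K ^ μ * (lK ^ q *
            (K ^ (-(α / 2)) * K ^ (-(q + α / 2)) * K ^ q * K ^ ρ)))) := by
          rw [hc3]; ring
      _ = c3 * (Λ * (K ^ μ * (lK ^ q * K ^ (ρ - α)))) := by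
          rw [← Real.rpow_add hK0, ← Real.rpow_add hK0, ← Real.rpow_add hK0]
          congr 4
          ring
      _ ≤ c3 * B := by
          rw [hB]
          apply mul_le_mul_of_nonneg_left _ hc3p.le
          apply mul_le_mul_of_nonneg_left _ hΛ.le
          apply mul_le_mul_of_nonneg_left _ hKμ0.le
          apply mul_le_mul_of_nonneg_left _ (by positivity)
          exact Real.rpow_le_rpow_of_exponent_le hK1 (by linarith)
  -- Term 4
  have hb4 : Λ * K ^ μ * (1 / K) ^ (α + m) * (K / Km) ^ m * (1 + 4 * ρ * lK) * τ ^ m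
      * K ^ (-(3 * ρ)) ≤ c4 * B := by
    have hfac : (1 / K) ^ (α + m) = K ^ (-(α + m)) := hinv _
    have hmid : 1 + 4 * ρ * lK ≤ 3 * lK := by
      have h2 : 4 * ρ * lK ≤ 2 * lK := mul_le_mul_of_nonneg_right hρ2 hlK0.le
      linarith
    calc Λ * K ^ μ * (1 / K) ^ (α + m) * (K / Km) ^ m * (1 + 4 * ρ * lK) * τ ^ m
          * K ^ (-(3 * ρ))
        ≤ Λ * K ^ μ * K ^ (-(α + m)) * M ^ m * (3 * lK) * (2 ^ m * (K ^ m * lK ^ m))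
          * K ^ (-(3 * ρ)) := by
          rw [hfac]
          apply mul_le_mul_of_nonneg_right _ (by positivity)
          apply mul_le_mul _ hτm (by positivity) (by positivity)
          apply mul_le_mul _ hmid (by positivity) (by positivity)
          exact mul_le_mul_of_nonneg_left hxm (by positivity)
      _ = c4 * (Λ * (K ^ μ * ((lK * lK ^ m) *
            (K ^ (-(α + m)) * K ^ m * K ^ (-(3 * ρ)))))) := by
          rw [hc4]; ring
      _ = c4 * (Λ * (K ^ μ * (lK ^ q * K ^ (-α - 3 * ρ)))) := by
          rw [← Real.rpow_add hK0, ← Real.rpow_add hK0]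
          have hlq : lK * lK ^ m = lK ^ q := by
            rw [hmq, Real.rpow_add hlK0, Real.rpow_one]; ring
          rw [hlq]
          congr 4
          ring
      _ ≤ c4 * B := by
          rw [hB]
          apply mul_le_mul_of_nonneg_left _ hc4p.le
          apply mul_le_mul_of_nonneg_left _ hΛ.le
          apply mul_le_mul_of_nonneg_left _ hKμ0.le
          apply mul_le_mul_of_nonneg_left _ (by positivity)
          exact Real.rpow_le_rpow_of_exponent_le hK1 (by linarith)
  have key : C₀ * g₀ ≤ (c1 + c2 + c3 + c4) * B := by
    calc C₀ * g₀ ≤ _ := hyp'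
      _ ≤ c1 * B + c2 * B + c3 * B + c4 * B := by
          exact add_le_add (add_le_add (add_le_add hb1 hb2) hb3) hb4
      _ = (c1 + c2 + c3 + c4) * B := by ring
  have hsplit : K ^ (μ - ρ) = K ^ μ * K ^ (-ρ) := by
    rw [← Real.rpow_add hK0, sub_eq_add_neg]
  calc g₀ = C₀ * g₀ / C₀ := by field_simp
    _ ≤ (c1 + c2 + c3 + c4) * B / C₀ := by
        exact (div_le_div_iff_of_pos_right hC₀).mpr key
    _ = (c1 + c2 + c3 + c4) / C₀ * Λ * lK ^ q * K ^ (μ - ρ) := by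
        rw [hB, hsplit]; ring
end
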